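/- Let L⁰ (with K₀ ≥ 1 steps) and L¹ (with K₁ ≥ 1 steps) be two load profiles over the same G ≥ 1 workers, each satisfying the load-profile setup with the same constants κ, P_idle, P_max, γ, and suppose W(L⁰) = W(L¹). If α > 0 is a real number with ImbTot(L¹) ≤ ImbTot(L⁰)/α, then E(L⁰) − E(L¹) ≥ κ · ImbTot(L⁰) · ( P_idle (1 − 1/α) − D_γ/α ), where D_γ = (1−γ)(P_max − P_idle). -/
import Mathlib


open Finset

/-- Per-step maximum load `L*(k) = max_g L(k,g)`. -/
noncomputable def Lstar (K G : ℕ) [NeZero G] (L : Fin K → Fin G → ℝ) (k : Fin K) : ℝ :=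
  Finset.univ.sup' ⟨0, Finset.mem_univ 0⟩ (L k)

/-- Utilization `u_g(k) = L(k,g) / L*(k)`. -/
noncomputable def uLoad (K G : ℕ) [NeZero G] (L : Fin K → Fin G → ℝ)
    (k : Fin K) (g : Fin G) : ℝ :=
  L k g / Lstar K G L k

/-- Total energy
`E(L) = κ ∑_k L*(k) ∑_g (P_idle + (P_max − P_idle) u_g(k)^γ)` (real power `rpow`). -/
noncomputable def energy (K G : ℕ) [NeZero G] (κ Pidle Pmax γ : ℝ)
    (L : Fin K → Fin G → ℝ) : ℝ :=
  κ * ∑ k : Fin K, Lstar K G L k *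
      ∑ g : Fin G, (Pidle + (Pmax - Pidle) * (uLoad K G L k g) ^ γ)

/-- Total workload `W(L) = ∑_k ∑_g L(k,g)`. -/
noncomputable def workTot (K G : ℕ) (L : Fin K → Fin G → ℝ) : ℝ :=
  ∑ k : Fin K, ∑ g : Fin G, L k g

/-- Total imbalance `ImbTot(L) = ∑_k ∑_g (L*(k) − L(k,g))`. -/
noncomputable def imbTot (K G : ℕ) [NeZero G] (L : Fin K → Fin G → ℝ) : ℝ :=
  ∑ k : Fin K, ∑ g : Fin G, (Lstar K G L k - L k g)


private lemma rpow_self_le {x γ : ℝ} (hx0 : 0 ≤ x) (hx1 : x ≤ 1)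
    (hγ0 : 0 < γ) (hγ1 : γ ≤ 1) : x ≤ x ^ γ := by
  rcases eq_or_lt_of_le hx0 with h | h
  · simp [← h, Real.zero_rpow hγ0.ne']
  · calc x = x ^ (1 : ℝ) := (Real.rpow_one x).symm
      _ ≤ x ^ γ := Real.rpow_le_rpow_of_exponent_ge h hx1 hγ1

private lemma rpow_le_affine {x γ : ℝ} (hx0 : 0 ≤ x)
    (hγ0 : 0 ≤ γ) (hγ1 : γ ≤ 1) : x ^ γ ≤ γ * x + (1 - γ) := by
  have := Real.geom_mean_le_arith_mean2_weighted (w₁ := γ) (w₂ := 1 - γ)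
    (p₁ := x) (p₂ := 1) hγ0 (by linarith) hx0 zero_le_one (by ring)
  simpa using this

private lemma energy_lb (K G : ℕ) [NeZero G] (κ Pidle Pmax γ : ℝ)
    (L : Fin K → Fin G → ℝ) (hL : ∀ k g, 0 ≤ L k g)
    (hLs : ∀ k, 0 < Lstar K G L k)
    (hκ : 0 ≤ κ) (hPm : Pidle ≤ Pmax) (hγ : γ ∈ Set.Ioo (0 : ℝ) 1) :
    κ * (Pmax * workTot K G L + Pidle * imbTot K G L) ≤
      energy K G κ Pidle Pmax γ L := by
  unfold energy workTot imbTot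
  apply mul_le_mul_of_nonneg_left _ hκ
  simp only [Finset.mul_sum, ← Finset.sum_add_distrib]
  apply Finset.sum_le_sum
  intro k _
  apply Finset.sum_le_sum
  intro g _
  have hLsk := hLs k
  have hu0 : 0 ≤ uLoad K G L k g := div_nonneg (hL k g) hLsk.le
  have hu1 : uLoad K G L k g ≤ 1 := by
    rw [uLoad, div_le_one hLsk]
    exact Finset.le_sup' (L k) (Finset.mem_univ g)
  have hkey : uLoad K G L k g ≤ (uLoad K G L k g) ^ γ :=
    rpow_self_le hu0 hu1 hγ.1 hγ.2.le
  have hmul : Lstar K G L k * uLoad K G L k g = L k g := by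
    rw [uLoad, mul_div_cancel₀ _ hLsk.ne']
  nlinarith [mul_le_mul_of_nonneg_left hkey hLsk.le,
    mul_le_mul_of_nonneg_left hkey (sub_nonneg.mpr hPm)]

private lemma energy_ub (K G : ℕ) [NeZero G] (κ Pidle Pmax γ : ℝ)
    (L : Fin K → Fin G → ℝ) (hL : ∀ k g, 0 ≤ L k g)
    (hLs : ∀ k, 0 < Lstar K G L k)
    (hκ : 0 ≤ κ) (hPm : Pidle ≤ Pmax) (hγ : γ ∈ Set.Ioo (0 : ℝ) 1) :
    energy K G κ Pidle Pmax γ L ≤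
      κ * (Pmax * workTot K G L + (Pidle + (1 - γ) * (Pmax - Pidle)) * imbTot K G L) := by
  unfold energy workTot imbTot
  apply mul_le_mul_of_nonneg_left _ hκ
  simp only [Finset.mul_sum, ← Finset.sum_add_distrib]
  apply Finset.sum_le_sum
  intro k _
  apply Finset.sum_le_sum
  intro g _
  have hLsk := hLs k
  have hu0 : 0 ≤ uLoad K G L k g := div_nonneg (hL k g) hLsk.le
  have hkey : (uLoad K G L k g) ^ γ ≤ γ * uLoad K G L k g + (1 - γ) :=
    rpow_le_affine hu0 hγ.1.le hγ.2.le
  have hmul : Lstar K G L k * uLoad K G L k g = L k g := by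
    rw [uLoad, mul_div_cancel₀ _ hLsk.ne']
  have h1 : Lstar K G L k * uLoad K G L k g ^ γ ≤ γ * L k g + (1 - γ) * Lstar K G L k := by
    have h2 := mul_le_mul_of_nonneg_left hkey hLsk.le
    have h3 : Lstar K G L k * (γ * uLoad K G L k g + (1 - γ)) =
        γ * L k g + (1 - γ) * Lstar K G L k := by rw [← hmul]; ring
    linarith
  nlinarith [mul_le_mul_of_nonneg_left h1 (sub_nonneg.mpr hPm)]

private lemma imbTot_nonneg (K G : ℕ) [NeZero G] (L : Fin K → Fin G → ℝ) :
    0 ≤ imbTot K G L := by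
  apply Finset.sum_nonneg; intro k _
  apply Finset.sum_nonneg; intro g _
  exact sub_nonneg.mpr (Finset.le_sup' (L k) (Finset.mem_univ g))

/-- If the baseline profile `L⁰` and the improved profile `L¹` process the same total
workload and `ImbTot(L¹) ≤ ImbTot(L⁰)/α`, then
`E(L⁰) − E(L¹) ≥ κ · ImbTot(L⁰) · (P_idle (1 − 1/α) − D_γ/α)`,
where `D_γ = (1−γ)(P_max − P_idle)`. -/
theorem energy_saving_of_imbalance_reduction (K₀ K₁ G : ℕ)
    [NeZero K₀] [NeZero K₁] [NeZero G]
    (L₀ : Fin K₀ → Fin G → ℝ) (L₁ : Fin K₁ → Fin G → ℝ)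
    (hL₀ : ∀ k g, 0 ≤ L₀ k g) (hL₁ : ∀ k g, 0 ≤ L₁ k g)
    (hLstar₀ : ∀ k, 0 < Lstar K₀ G L₀ k) (hLstar₁ : ∀ k, 0 < Lstar K₁ G L₁ k)
    (κ Pidle Pmax γ : ℝ) (hκ : 0 < κ) (hPi : 0 ≤ Pidle) (hPm : Pidle ≤ Pmax)
    (hγ : γ ∈ Set.Ioo (0 : ℝ) 1)
    (hW : workTot K₀ G L₀ = workTot K₁ G L₁)
    (α : ℝ) (hα : 0 < α)
    (hImb : imbTot K₁ G L₁ ≤ imbTot K₀ G L₀ / α) :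
    κ * imbTot K₀ G L₀ * (Pidle * (1 - 1 / α) - (1 - γ) * (Pmax - Pidle) / α) ≤
      energy K₀ G κ Pidle Pmax γ L₀ - energy K₁ G κ Pidle Pmax γ L₁ := by
  have h0 := energy_lb K₀ G κ Pidle Pmax γ L₀ hL₀ hLstar₀ hκ.le hPm hγ
  have h1 := energy_ub K₁ G κ Pidle Pmax γ L₁ hL₁ hLstar₁ hκ.le hPm hγ
  have hI₀ := imbTot_nonneg K₀ G L₀
  have hI₁ := imbTot_nonneg K₁ G L₁
  have hD : 0 ≤ (1 - γ) * (Pmax - Pidle) :=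
    mul_nonneg (by linarith [hγ.2]) (sub_nonneg.mpr hPm)
  have hcoef : 0 ≤ Pidle + (1 - γ) * (Pmax - Pidle) := by linarith
  have hImb' : κ * ((Pidle + (1 - γ) * (Pmax - Pidle)) * imbTot K₁ G L₁) ≤
      κ * ((Pidle + (1 - γ) * (Pmax - Pidle)) * (imbTot K₀ G L₀ / α)) := by
    apply mul_le_mul_of_nonneg_left _ hκ.le
    exact mul_le_mul_of_nonneg_left hImb hcoef
  rw [hW] at h0
  have : κ * imbTot K₀ G L₀ * (Pidle * (1 - 1 / α) - (1 - γ) * (Pmax - Pidle) / α) =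
      κ * (Pmax * workTot K₁ G L₁ + Pidle * imbTot K₀ G L₀) -
      κ * (Pmax * workTot K₁ G L₁ +
        (Pidle + (1 - γ) * (Pmax - Pidle)) * (imbTot K₀ G L₀ / α)) := by
    field_simp
    ring
  rw [this]
  linarith
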